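/- arXiv:1701.01610 — 5 statements merged into one kernel-verified Lean document; each statement's English description precedes it below -/
import Mathlib

section
/- Let E be a compact convex subset of a locally convex Hausdorff topological vector space. If the collection of nonempty closed faces of E is compact in the Vietoris topology, then the set of extreme points of E is closed in E (hence compact). -/
open Topology Filter Set

/-- The hyperspace of nonempty closed subsets of a topological space. -/
def Hyper (X : Type*) [TopologicalSpace X] : Type _ :=
  {K : Set X // IsClosed K ∧ K.Nonempty}

/-- The Vietoris topology on the hyperspace. -/
instance vietoris (X : Type*) [TopologicalSpace X] : TopologicalSpace (Hyper X) :=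
  TopologicalSpace.generateFrom
    ({S | ∃ U : Set X, IsOpen U ∧ S = {K : Hyper X | K.1 ⊆ U}} ∪
     {S | ∃ U : Set X, IsOpen U ∧ S = {K : Hyper X | (K.1 ∩ U).Nonempty}})

/-- `F` is a face of the convex set `E`: a convex subset of `E` such that whenever a proper
convex combination of two points of `E` lies in `F`, both points lie in `F`. -/
def IsFaceOf {V : Type*} [AddCommGroup V] [Module ℝ V] (E F : Set V) : Prop :=
  F ⊆ E ∧ Convex ℝ F ∧
    ∀ x ∈ E, ∀ y ∈ E, ∀ t : ℝ, 0 < t → t < 1 → t • x + (1 - t) • y ∈ F → x ∈ F ∧ y ∈ F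

lemma face_singleton_iff {V : Type*} [AddCommGroup V] [Module ℝ V] {E : Set V} {x : V}
    (hx : x ∈ E) : IsFaceOf E {x} ↔ x ∈ E.extremePoints ℝ := by
  constructor
  · rintro ⟨-, -, hface⟩
    refine ⟨hx, ?_⟩
    rintro x₁ hx₁ x₂ hx₂ ⟨a, b, ha, hb, hab, habx⟩
    have h2 : a • x₁ + (1 - a) • x₂ ∈ ({x} : Set V) := by
      rw [show (1 - a) = b by linarith, habx]; exact rfl
    have := hface x₁ hx₁ x₂ hx₂ a ha (by linarith) h2
    exact this.1
  · rintro ⟨-, hext⟩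
    refine ⟨singleton_subset_iff.2 hx, convex_singleton x, ?_⟩
    rintro x₁ hx₁ x₂ hx₂ t ht ht1 hmem
    exact ⟨hext hx₁ hx₂ ⟨t, 1 - t, ht, by linarith, by ring, hmem⟩,
      hext hx₂ hx₁ ⟨1 - t, t, by linarith, ht, by ring, by rw [add_comm]; exact hmem⟩⟩

/-- Theorem 5.4: if the collection of nonempty closed faces of `E` is compact in the Vietoris
topology, then the set of extreme points of `E` is closed in `E` (hence compact). -/
theorem stmt5 (V : Type*) [AddCommGroup V] [Module ℝ V] [TopologicalSpace V]
    [IsTopologicalAddGroup V] [ContinuousSMul ℝ V] [T2Space V] [LocallyConvexSpace ℝ V]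
    (E : Set V) (hEcomp : IsCompact E) (hEconv : Convex ℝ E)
    (h : IsCompact {K : Hyper E | IsFaceOf E (Subtype.val '' K.1)}) :
    IsClosed (Subtype.val ⁻¹' (E.extremePoints ℝ) : Set E) ∧
    IsCompact (E.extremePoints ℝ) := by
  -- singleton map into the hyperspace
  set s : E → Hyper E := fun x => ⟨({x} : Set E), isClosed_singleton, singleton_nonempty x⟩
    with hs_def
  set A : Set E := Subtype.val ⁻¹' (E.extremePoints ℝ) with hA
  -- singleton faces correspond to extreme points
  have hsingle : ∀ x : E, IsFaceOf E (Subtype.val '' ({x} : Set E)) ↔ (x : V) ∈ E.extremePoints ℝ := by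
    intro x
    rw [image_singleton]
    exact face_singleton_iff x.2
  have hAclosed : IsClosed A := by
    rw [← isOpen_compl_iff]
    rw [isOpen_iff_mem_nhds]
    intro x hxA
    -- suppose x is in the closure of A; we derive x ∈ A, contradiction route:
    by_contra hnot
    have hxcl : x ∈ closure A := by
      rw [mem_closure_iff_nhds]
      intro t ht
      by_contra hempty
      rw [not_nonempty_iff_eq_empty] at hempty
      exact hnot (Filter.mem_of_superset ht (fun y hy hyA =>
        (eq_empty_iff_forall_notMem.1 hempty y) ⟨hy, hyA⟩))
    -- the filter of A-points approaching x, pushed into the hyperspace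
    have hne : (𝓝[A] x).NeBot := mem_closure_iff_nhdsWithin_neBot.1 hxcl
    have hle : Filter.map s (𝓝[A] x) ≤ 𝓟 {K : Hyper E | IsFaceOf E (Subtype.val '' K.1)} := by
      rw [Filter.le_principal_iff, Filter.mem_map]
      filter_upwards [self_mem_nhdsWithin] with a ha
      exact (hsingle a).2 ha
    obtain ⟨K, hKface, hKcl⟩ := h hle
    -- K must equal {x}
    have hKsub : K.1 ⊆ {x} := by
      intro y hy
      by_contra hyx
      have hyx' : y ≠ x := hyx
      obtain ⟨U, W, hU, hW, hyU, hxW, hUW⟩ := t2_separation hyx'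
      have hOopen : IsOpen {L : Hyper E | (L.1 ∩ U).Nonempty} :=
        TopologicalSpace.isOpen_generateFrom_of_mem (Or.inr ⟨U, hU, rfl⟩)
      have hOmem : {L : Hyper E | (L.1 ∩ U).Nonempty} ∈ 𝓝 K :=
        hOopen.mem_nhds ⟨y, hy, hyU⟩
      have hfreq : ∃ᶠ L in Filter.map s (𝓝[A] x), (L.1 ∩ U).Nonempty := by
        rw [Filter.frequently_iff]
        intro t ht
        obtain ⟨L, hLO, hLt⟩ := clusterPt_iff_nonempty.1 hKcl hOmem ht
        exact ⟨L, hLt, hLO⟩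
      rw [Filter.frequently_map] at hfreq
      have hfreq' : ∃ᶠ a in 𝓝[A] x, a ∈ U := by
        refine hfreq.mono fun a ha => ?_
        obtain ⟨z, hz, hzU⟩ := ha
        rwa [mem_singleton_iff.1 hz] at hzU
      have hev : ∀ᶠ a in 𝓝[A] x, a ∈ W :=
        mem_nhdsWithin_of_mem_nhds (hW.mem_nhds hxW)
      obtain ⟨a, haU, haW⟩ := (hfreq'.and_eventually hev).exists
      exact (disjoint_left.1 hUW haU) haW
    have hKeq : K.1 = {x} := hKsub.antisymm (by
      obtain ⟨z, hz⟩ := K.2.2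
      have := hKsub hz
      rw [mem_singleton_iff] at this
      rw [← this]
      exact singleton_subset_iff.2 hz)
    have hface : IsFaceOf E (Subtype.val '' ({x} : Set E)) := by rw [← hKeq]; exact hKface
    exact hxA ((hsingle x).1 hface)
  refine ⟨hAclosed, ?_⟩
  have hEcomp' : CompactSpace E := isCompact_iff_compactSpace.1 hEcomp
  have hAcomp : IsCompact A := hAclosed.isCompact
  have : Subtype.val '' A = E.extremePoints ℝ := by
    rw [hA, Subtype.image_preimage_coe]
    exact inter_eq_right.2 (extremePoints_subset)
  rw [← this]
  exact hAcomp.image continuous_subtype_val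
end

section
/- Let E be a compact convex subset of a locally convex Hausdorff topological vector space. If E is stable, i.e., for every t ∈ [0,1] the map (x,y) ↦ tx + (1−t)y from E × E to E is open, then the set of nonempty closed faces of E is a closed subset of the set of nonempty closed convex subsets of E in the Vietoris topology; in particular the set of nonempty closed faces of E is compact in the Vietoris topology. -/
open Topology Filter Set

section HyperAux

variable {X : Type*} [TopologicalSpace X]

lemma isOpen_sub {U : Set X} (hU : IsOpen U) : IsOpen {K : Hyper X | K.1 ⊆ U} :=
  TopologicalSpace.isOpen_generateFrom_of_mem (Or.inl ⟨U, hU, rfl⟩)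

lemma isOpen_hit {U : Set X} (hU : IsOpen U) : IsOpen {K : Hyper X | (K.1 ∩ U).Nonempty} :=
  TopologicalSpace.isOpen_generateFrom_of_mem (Or.inr ⟨U, hU, rfl⟩)

lemma hyper_compact [CompactSpace X] : IsCompact (univ : Set (Hyper X)) := by
  rw [isCompact_iff_ultrafilter_le_nhds]
  intro F _
  set K : Set X := {x | ∀ U : Set X, IsOpen U → x ∈ U →
    {L : Hyper X | (L.1 ∩ U).Nonempty} ∈ F} with hKdef
  have hmiss : ∀ {U : Set X}, {L : Hyper X | (L.1 ∩ U).Nonempty} ∉ F →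
      {L : Hyper X | L.1 ∩ U = ∅} ∈ F := by
    intro U hU
    have := (Ultrafilter.compl_mem_iff_notMem (f := F)).2 hU
    refine mem_of_superset this ?_
    intro L hL
    simpa [not_nonempty_iff_eq_empty] using hL
  have hKc : IsClosed K := by
    rw [← isOpen_compl_iff, isOpen_iff_forall_mem_open]
    intro x hx
    simp only [hKdef, mem_compl_iff, mem_setOf_eq, not_forall] at hx
    obtain ⟨U, hU, hxU, hF⟩ := hx
    exact ⟨U, fun y hy hyK => hF (hyK U hU hy), hU, hxU⟩
  have hKne : K.Nonempty := by
    by_contra hne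
    rw [not_nonempty_iff_eq_empty] at hne
    have h : ∀ x : X, ∃ U : Set X, IsOpen U ∧ x ∈ U ∧
        {L : Hyper X | (L.1 ∩ U).Nonempty} ∉ F := by
      intro x
      have : x ∉ K := by rw [hne]; exact notMem_empty x
      simpa only [hKdef, mem_setOf_eq, not_forall, exists_prop] using this
    choose U hUo hUmem hUF using h
    obtain ⟨s, hs⟩ := isCompact_univ.elim_finite_subcover U hUo
      (fun x _ => mem_iUnion.2 ⟨x, hUmem x⟩)
    have hA : (⋂ i ∈ s, {L : Hyper X | L.1 ∩ U i = ∅}) ∈ F :=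
      (Filter.biInter_mem s.finite_toSet).2 fun i _ => hmiss (hUF i)
    obtain ⟨L, hL⟩ := F.nonempty_of_mem hA
    obtain ⟨p, hp⟩ := L.2.2
    have hex := hs (mem_univ p)
    simp only [mem_iUnion, exists_prop] at hex
    obtain ⟨i, hi, hpi⟩ := hex
    have heq : L.1 ∩ U i = ∅ := mem_iInter₂.1 hL i hi
    have : p ∈ L.1 ∩ U i := ⟨hp, hpi⟩
    rw [heq] at this
    exact this.elim
  refine ⟨⟨K, hKc, hKne⟩, mem_univ _, ?_⟩
  refine le_trans (le_iInf₂ fun s hs => le_principal_iff.2 ?_)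
    (le_of_eq (TopologicalSpace.nhds_generateFrom).symm)
  obtain ⟨hKs, hsg⟩ := hs
  rcases hsg with ⟨U, hU, rfl⟩ | ⟨U, hU, rfl⟩
  · -- K ⊆ U ; show {L | L.1 ⊆ U} ∈ F
    by_contra hF
    have hB : {L : Hyper X | (L.1 ∩ Uᶜ).Nonempty} ∈ F := by
      have := (Ultrafilter.compl_mem_iff_notMem (f := F)).2 hF
      refine mem_of_superset this ?_
      intro L hL
      simp only [mem_compl_iff, mem_setOf_eq] at hL
      obtain ⟨p, hp, hpU⟩ := not_subset.1 hL
      exact ⟨p, hp, hpU⟩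
    have hC : IsCompact (Uᶜ) := hU.isClosed_compl.isCompact
    have h : ∀ x : ↥(Uᶜ), ∃ V : Set X, IsOpen V ∧ (x : X) ∈ V ∧
        {L : Hyper X | (L.1 ∩ V).Nonempty} ∉ F := by
      intro x
      have hxK : (x : X) ∉ K := fun hx => x.2 (hKs hx)
      simpa only [hKdef, mem_setOf_eq, not_forall, exists_prop] using hxK
    choose V hVo hVmem hVF using h
    obtain ⟨s, hs⟩ := hC.elim_finite_subcover V hVo
      (fun x hx => mem_iUnion.2 ⟨⟨x, hx⟩, hVmem ⟨x, hx⟩⟩)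
    have hA : (⋂ i ∈ s, {L : Hyper X | L.1 ∩ V i = ∅}) ∈ F :=
      (Filter.biInter_mem s.finite_toSet).2 fun i _ => hmiss (hVF i)
    obtain ⟨L, hLA, hLB⟩ := F.nonempty_of_mem (inter_mem hA hB)
    obtain ⟨p, hpL, hpU⟩ := hLB
    have hex := hs hpU
    simp only [mem_iUnion, exists_prop] at hex
    obtain ⟨i, hi, hpi⟩ := hex
    have heq : L.1 ∩ V i = ∅ := mem_iInter₂.1 hLA i hi
    have : p ∈ L.1 ∩ V i := ⟨hpL, hpi⟩
    rw [heq] at this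
    exact this.elim
  · obtain ⟨x, hxK, hxU⟩ := hKs
    exact hxK U hU hxU

end HyperAux

/-- Theorem 5.6: if `E` is stable (every convex-combination map `E × E → E` is open), then
the nonempty closed faces of `E` form a closed subset of the nonempty closed convex subsets
of `E` in the Vietoris topology; in particular the set of nonempty closed faces is compact. -/
theorem stmt6 (V : Type*) [AddCommGroup V] [Module ℝ V] [TopologicalSpace V]
    [IsTopologicalAddGroup V] [ContinuousSMul ℝ V] [T2Space V] [LocallyConvexSpace ℝ V]
    (E : Set V) (hEcomp : IsCompact E) (hEconv : Convex ℝ E)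
    (hstable : ∀ t : ℝ, ∀ ht0 : 0 ≤ t, ∀ ht1 : t ≤ 1,
      IsOpenMap (fun p : E × E =>
        (⟨t • (p.1 : V) + (1 - t) • (p.2 : V),
          hEconv p.1.2 p.2.2 ht0 (by linarith) (by ring)⟩ : E))) :
    IsClosed {K : {C : Hyper E // Convex ℝ (Subtype.val '' C.1)} |
        IsFaceOf E (Subtype.val '' K.1.1)} ∧
    IsCompact {K : Hyper E | IsFaceOf E (Subtype.val '' K.1)} := by
  haveI : CompactSpace ↥E := isCompact_iff_compactSpace.1 hEcomp
  -- continuity of the combination maps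
  have hcont : ∀ t : ℝ, ∀ ht0 : 0 ≤ t, ∀ ht1 : t ≤ 1,
      Continuous (fun p : E × E =>
        (⟨t • (p.1 : V) + (1 - t) • (p.2 : V),
          hEconv p.1.2 p.2.2 ht0 (by linarith) (by ring)⟩ : E)) := by
    intro t ht0 ht1
    refine Continuous.subtype_mk ?_ _
    exact ((continuous_subtype_val.comp continuous_fst).const_smul t).add
      ((continuous_subtype_val.comp continuous_snd).const_smul (1 - t))
  -- membership in the image set
  have hmemim : ∀ (K : Hyper ↥E) (v : V) (hv : v ∈ E),
      v ∈ Subtype.val '' K.1 ↔ (⟨v, hv⟩ : ↥E) ∈ K.1 := by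
    intro K v hv
    constructor
    · rintro ⟨a, ha, rfl⟩; exact ha
    · intro h; exact ⟨⟨v, hv⟩, h, rfl⟩
  -- the key step: a failure of extremality gives an open neighborhood avoiding faces
  have main : ∀ (K : Hyper ↥E) (x y : V), x ∈ E → y ∈ E → ∀ t : ℝ, 0 < t → t < 1 →
      t • x + (1 - t) • y ∈ Subtype.val '' K.1 → x ∉ Subtype.val '' K.1 →
      ∃ N : Set (Hyper ↥E), IsOpen N ∧ K ∈ N ∧
        ∀ L ∈ N, ¬ IsFaceOf E (Subtype.val '' L.1) := by
    intro K x y hxE hyE t ht0 ht1 hzF hxF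
    have hzE : t • x + (1 - t) • y ∈ E := hEconv hxE hyE ht0.le (by linarith) (by ring)
    set f := (fun p : E × E =>
        (⟨t • (p.1 : V) + (1 - t) • (p.2 : V),
          hEconv p.1.2 p.2.2 ht0.le (by linarith) (by ring)⟩ : E)) with hf
    have hxK : (⟨x, hxE⟩ : ↥E) ∉ K.1 := fun h => hxF ((hmemim K x hxE).2 h)
    obtain ⟨U, W, hUo, hWo, hKU, hxW, hdisj⟩ :=
      (K.2.1.isCompact).separation_of_notMem hxK
    set O : Set ↥E := f '' (W ×ˢ univ) with hO
    have hOo : IsOpen O := hstable t ht0.le ht1.le _ (hWo.prod isOpen_univ)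
    have hzO : (⟨t • x + (1 - t) • y, hzE⟩ : ↥E) ∈ O :=
      ⟨(⟨x, hxE⟩, ⟨y, hyE⟩), ⟨hxW, mem_univ _⟩, rfl⟩
    refine ⟨{L : Hyper ↥E | L.1 ⊆ U} ∩ {L | (L.1 ∩ O).Nonempty},
      (isOpen_sub hUo).inter (isOpen_hit hOo), ⟨hKU, ⟨⟨_, hzE⟩, (hmemim K _ hzE).1 hzF, hzO⟩⟩, ?_⟩
    rintro L ⟨hLU, ⟨p, hpL, hpO⟩⟩ hface
    obtain ⟨⟨a, b⟩, ⟨haW, -⟩, hab⟩ := hpO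
    have hcomb : t • (a : V) + (1 - t) • (b : V) ∈ Subtype.val '' L.1 := by
      rw [show (t • (a : V) + (1 - t) • (b : V)) = (p : V) from congrArg Subtype.val hab]
      exact ⟨p, hpL, rfl⟩
    have haL : (a : V) ∈ Subtype.val '' L.1 :=
      (hface.2.2 (a : V) a.2 (b : V) b.2 t ht0 ht1 hcomb).1
    have : a ∈ L.1 := (hmemim L _ a.2).1 haL
    exact absurd haW (disjoint_left.1 hdisj (hLU this))
  -- failure of convexity also gives such a neighborhood
  have mainc : ∀ (K : Hyper ↥E) (x y : V), x ∈ Subtype.val '' K.1 → y ∈ Subtype.val '' K.1 →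
      ∀ t : ℝ, 0 < t → t < 1 → t • x + (1 - t) • y ∉ Subtype.val '' K.1 →
      ∃ N : Set (Hyper ↥E), IsOpen N ∧ K ∈ N ∧
        ∀ L ∈ N, ¬ IsFaceOf E (Subtype.val '' L.1) := by
    intro K x y hxF hyF t ht0 ht1 hzF
    have hxE : x ∈ E := (image_subset_iff.2 (fun a _ => a.2) hxF)
    have hyE : y ∈ E := (image_subset_iff.2 (fun a _ => a.2) hyF)
    have hzE : t • x + (1 - t) • y ∈ E := hEconv hxE hyE ht0.le (by linarith) (by ring)
    set f := (fun p : E × E =>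
        (⟨t • (p.1 : V) + (1 - t) • (p.2 : V),
          hEconv p.1.2 p.2.2 ht0.le (by linarith) (by ring)⟩ : E)) with hf
    have hzK : (⟨t • x + (1 - t) • y, hzE⟩ : ↥E) ∉ K.1 := fun h => hzF ((hmemim K _ hzE).2 h)
    obtain ⟨U, W, hUo, hWo, hKU, hzW, hdisj⟩ :=
      (K.2.1.isCompact).separation_of_notMem hzK
    have hfc := hcont t ht0.le ht1.le
    have hfz : f (⟨x, hxE⟩, ⟨y, hyE⟩) ∈ W := hzW
    have hpre : IsOpen (f ⁻¹' W) := hfc.isOpen_preimage W hWo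
    obtain ⟨Ux, Uy, hUxo, hUyo, hxUx, hyUy, hsub⟩ :=
      isOpen_prod_iff.1 hpre ⟨x, hxE⟩ ⟨y, hyE⟩ hfz
    refine ⟨{L : Hyper ↥E | L.1 ⊆ U} ∩ {L | (L.1 ∩ Ux).Nonempty} ∩ {L | (L.1 ∩ Uy).Nonempty},
      ((isOpen_sub hUo).inter (isOpen_hit hUxo)).inter (isOpen_hit hUyo),
      ⟨⟨hKU, ⟨⟨x, hxE⟩, (hmemim K _ hxE).1 hxF, hxUx⟩⟩,
        ⟨⟨y, hyE⟩, (hmemim K _ hyE).1 hyF, hyUy⟩⟩, ?_⟩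
    rintro L ⟨⟨hLU, ⟨a, haL, haUx⟩⟩, ⟨b, hbL, hbUy⟩⟩ hface
    have hcomb : t • (a : V) + (1 - t) • (b : V) ∈ Subtype.val '' L.1 :=
      hface.2.1 ⟨a, haL, rfl⟩ ⟨b, hbL, rfl⟩ ht0.le (by linarith) (by ring)
    have hfab : f (a, b) ∈ W := hsub (mk_mem_prod haUx hbUy)
    have : f (a, b) ∈ L.1 := (hmemim L _ (f (a, b)).2).1 (by exact hcomb)
    exact absurd hfab (disjoint_left.1 hdisj (hLU this))
  -- the set of faces is closed in the whole hyperspace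
  have hclosed : IsClosed {K : Hyper ↥E | IsFaceOf E (Subtype.val '' K.1)} := by
    rw [← isOpen_compl_iff, isOpen_iff_forall_mem_open]
    intro K hK
    simp only [mem_compl_iff, mem_setOf_eq] at hK
    have hsubE : Subtype.val '' K.1 ⊆ E := image_subset_iff.2 fun a _ => a.2
    have : ∃ N : Set (Hyper ↥E), IsOpen N ∧ K ∈ N ∧
        ∀ L ∈ N, ¬ IsFaceOf E (Subtype.val '' L.1) := by
      by_cases hconv : Convex ℝ (Subtype.val '' K.1)
      · -- extremality fails
        have hext : ¬ ∀ x ∈ E, ∀ y ∈ E, ∀ t : ℝ, 0 < t → t < 1 →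
            t • x + (1 - t) • y ∈ Subtype.val '' K.1 →
            x ∈ Subtype.val '' K.1 ∧ y ∈ Subtype.val '' K.1 := by
          intro h; exact hK ⟨hsubE, hconv, h⟩
        push_neg at hext
        obtain ⟨x, hxE, y, hyE, t, ht0, ht1, hzF, hxy⟩ := hext
        by_cases hx : x ∈ Subtype.val '' K.1
        case neg => exact main K x y hxE hyE t ht0 ht1 hzF hx
        · have hy := hxy hx
          refine main K y x hyE hxE (1 - t) (by linarith) (by linarith) ?_ hy
          rw [show (1 : ℝ) - (1 - t) = t by ring, add_comm]
          exact hzF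
      · -- convexity fails
        rw [convex_iff_forall_pos] at hconv
        push_neg at hconv
        obtain ⟨x, hxF, y, hyF, t, s, ht0, hs0, hts, hzF⟩ := hconv
        have hs : s = 1 - t := by linarith
        subst hs
        exact mainc K x y hxF hyF t ht0 (by linarith) hzF
    obtain ⟨N, hNo, hKN, hN⟩ := this
    exact ⟨N, fun L hL => hN L hL, hNo, hKN⟩
  constructor
  · exact hclosed.preimage (continuous_subtype_val :
      Continuous (Subtype.val : {C : Hyper ↥E // Convex ℝ (Subtype.val '' C.1)} → Hyper ↥E))
  · exact hyper_compact.of_isClosed_subset hclosed (subset_univ _)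
end

section
/- Let (X,d) be a compact metric space with at least two points. For any continuous real-valued function f on X, the Lipschitz seminorm of f equals the supremum over pairs of distinct Borel probability measures μ, ν on X of |μ(f) − ν(f)| / ρ_d(μ,ν), where ρ_d is the Monge–Kantorovich distance. -/
open Topology Filter Set MeasureTheory

/-- The Monge–Kantorovich distance between two (probability) measures:
`ρ_d(μ,ν) = sup {|∫ f dμ − ∫ f dν| : f 1-Lipschitz}`. -/
noncomputable def mkDist {X : Type*} [MetricSpace X] [MeasurableSpace X]
    (μ ν : ProbabilityMeasure X) : ℝ :=
  ⨆ f : {f : X → ℝ // LipschitzWith 1 f},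
    |∫ x, f.1 x ∂(μ : Measure X) - ∫ x, f.1 x ∂(ν : Measure X)|

section aux

variable {X : Type*} [MetricSpace X] [CompactSpace X] [Nonempty X]
    [MeasurableSpace X] [BorelSpace X]

lemma integrable_of_lip (μ : ProbabilityMeasure X) {g : X → ℝ} (hg : Continuous g) :
    Integrable g (μ : Measure X) :=
  hg.integrable_of_hasCompactSupport (HasCompactSupport.of_compactSpace g)

lemma mkDist_bdd (μ ν : ProbabilityMeasure X) :
    BddAbove (Set.range fun f : {f : X → ℝ // LipschitzWith 1 f} =>
      |∫ x, f.1 x ∂(μ : Measure X) - ∫ x, f.1 x ∂(ν : Measure X)|) := by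
  obtain ⟨x0⟩ := (inferInstance : Nonempty X)
  refine ⟨2 * Metric.diam (Set.univ : Set X), ?_⟩
  rintro r ⟨⟨g, hg⟩, rfl⟩
  simp only
  set C := Metric.diam (Set.univ : Set X) with hC
  have key : ∀ κ : ProbabilityMeasure X,
      |∫ x, g x ∂(κ : Measure X) - g x0| ≤ C := by
    intro κ
    have h1 : ∫ x, g x ∂(κ : Measure X) - g x0
        = ∫ x, (g x - g x0) ∂(κ : Measure X) := by
      rw [integral_sub (integrable_of_lip κ hg.continuous) (integrable_const _)]
      simp
    rw [h1]
    have := norm_integral_le_of_norm_le_const (μ := (κ : Measure X))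
      (f := fun x => g x - g x0) (C := C) ?_
    · simpa using this
    · filter_upwards with x
      have h2 : dist (g x) (g x0) ≤ 1 * dist x x0 := hg.dist_le_mul x x0
      have h3 : dist x x0 ≤ C :=
        Metric.dist_le_diam_of_mem (isCompact_univ.isBounded) trivial trivial
      simp only [Real.norm_eq_abs, Real.dist_eq] at h2 ⊢
      linarith
  calc |∫ x, g x ∂(μ : Measure X) - ∫ x, g x ∂(ν : Measure X)|
      = |(∫ x, g x ∂(μ : Measure X) - g x0) - (∫ x, g x ∂(ν : Measure X) - g x0)| := by
        ring_nf
    _ ≤ |∫ x, g x ∂(μ : Measure X) - g x0| + |∫ x, g x ∂(ν : Measure X) - g x0| :=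
        abs_sub _ _
    _ ≤ C + C := add_le_add (key μ) (key ν)
    _ = 2 * C := by ring

instance : Nonempty {f : X → ℝ // LipschitzWith 1 f} :=
  ⟨⟨fun _ => 0, (LipschitzWith.const 0).weaken zero_le_one⟩⟩

lemma mkDist_nonneg (μ ν : ProbabilityMeasure X) : 0 ≤ mkDist μ ν := by
  refine le_trans ?_ (le_ciSup (mkDist_bdd μ ν)
    ⟨fun _ => 0, (LipschitzWith.const 0).weaken zero_le_one⟩)
  simp

lemma abs_sub_integral_le (μ ν : ProbabilityMeasure X) {g : X → ℝ}
    (hg : LipschitzWith 1 g) :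
    |∫ x, g x ∂(μ : Measure X) - ∫ x, g x ∂(ν : Measure X)| ≤ mkDist μ ν :=
  le_ciSup (mkDist_bdd μ ν) ⟨g, hg⟩

noncomputable def diracP (x : X) : ProbabilityMeasure X :=
  ⟨Measure.dirac x, inferInstance⟩

lemma diracP_coe (x : X) : ((diracP x : ProbabilityMeasure X) : Measure X) = Measure.dirac x :=
  rfl

lemma mkDist_dirac {x y : X} : mkDist (diracP x) (diracP y) = dist x y := by
  apply le_antisymm
  · apply ciSup_le
    rintro ⟨g, hg⟩
    rw [diracP_coe, diracP_coe]
    rw [MeasureTheory.integral_dirac' g x hg.continuous.stronglyMeasurable,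
      MeasureTheory.integral_dirac' g y hg.continuous.stronglyMeasurable]
    have := hg.dist_le_mul x y
    simpa [Real.dist_eq] using this
  · have h := abs_sub_integral_le (diracP x) (diracP y)
      (g := fun z => dist z y) (LipschitzWith.dist_left y)
    rw [diracP_coe, diracP_coe] at h
    rw [MeasureTheory.integral_dirac' _ x
        ((LipschitzWith.dist_left y).continuous.stronglyMeasurable),
      MeasureTheory.integral_dirac' _ y
        ((LipschitzWith.dist_left y).continuous.stronglyMeasurable)] at h
    simpa [abs_of_nonneg dist_nonneg] using h

end aux

/-- For a compact metric space `X` with at least two points and a continuous `f : X → ℝ`,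
the Lipschitz seminorm of `f` (valued in `[0,∞]`) equals the supremum over pairs of distinct
Borel probability measures `μ ≠ ν` of `|μ(f) − ν(f)| / ρ_d(μ,ν)`. -/
theorem stmt8 (X : Type*) [MetricSpace X] [CompactSpace X] [Nontrivial X]
    [MeasurableSpace X] [BorelSpace X] (f : X → ℝ) (hf : Continuous f) :
    (⨆ (x : X) (y : X) (_ : x ≠ y), ENNReal.ofReal (|f x - f y| / dist x y)) =
      ⨆ (μ : ProbabilityMeasure X) (ν : ProbabilityMeasure X) (_ : μ ≠ ν),
        ENNReal.ofReal
          (|∫ x, f x ∂(μ : Measure X) - ∫ x, f x ∂(ν : Measure X)| / mkDist μ ν) := by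
  have hfm := hf.stronglyMeasurable
  apply le_antisymm
  · -- LHS ≤ RHS via Dirac measures
    refine iSup_le fun x => iSup_le fun y => iSup_le fun hxy => ?_
    have hne : diracP x ≠ diracP (X := X) y := by
      intro h
      exact MeasureTheory.dirac_ne_dirac_iff_exists_measurableSet.mpr
        ⟨{x}, measurableSet_singleton x, Set.mem_singleton x, by simp [hxy.symm]⟩
        (congrArg (fun κ : ProbabilityMeasure X => (κ : Measure X)) h)
    calc ENNReal.ofReal (|f x - f y| / dist x y)
        ≤ ⨆ (_ : diracP x ≠ diracP (X := X) y), ENNReal.ofReal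
            (|∫ z, f z ∂((diracP x : ProbabilityMeasure X) : Measure X)
              - ∫ z, f z ∂((diracP y : ProbabilityMeasure X) : Measure X)|
              / mkDist (diracP x) (diracP y)) := by
          rw [iSup_pos hne]
          apply le_of_eq
          congr 1
          rw [diracP_coe, diracP_coe]
          rw [MeasureTheory.integral_dirac' f x hfm, MeasureTheory.integral_dirac' f y hfm]
          rw [show mkDist (diracP (X := X) x) (diracP y) = dist x y from mkDist_dirac]
      _ ≤ _ := by
          apply le_iSup_of_le (diracP x)
          apply le_iSup_of_le (diracP y)
          exact le_rfl
  · -- RHS ≤ LHS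
    set S := ⨆ (x : X) (y : X) (_ : x ≠ y), ENNReal.ofReal (|f x - f y| / dist x y) with hS
    rcases eq_or_ne S ⊤ with htop | hne
    · exact le_trans le_top htop.symm.le
    set L := S.toReal with hL
    have hL0 : 0 ≤ L := ENNReal.toReal_nonneg
    have hlip : ∀ x y : X, |f x - f y| ≤ L * dist x y := by
      intro x y
      rcases eq_or_ne x y with rfl | hxy
      · simp
      · have h1 : ENNReal.ofReal (|f x - f y| / dist x y) ≤ S := by
          rw [hS]
          exact le_iSup_of_le x (le_iSup_of_le y (le_iSup_of_le hxy le_rfl))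
        have h2 : |f x - f y| / dist x y ≤ L :=
          (ENNReal.ofReal_le_iff_le_toReal hne).mp h1
        have hd : (0 : ℝ) < dist x y := dist_pos.mpr hxy
        calc |f x - f y| = |f x - f y| / dist x y * dist x y := by field_simp
          _ ≤ L * dist x y := by nlinarith
    refine iSup_le fun μ => iSup_le fun ν => iSup_le fun hμν => ?_
    have key : |∫ x, f x ∂(μ : Measure X) - ∫ x, f x ∂(ν : Measure X)|
        ≤ L * mkDist μ ν := by
      rcases eq_or_lt_of_le hL0 with hL0' | hLpos
      · -- L = 0 : f is constant
        obtain ⟨x0⟩ := (inferInstance : Nonempty X)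
        have hconst : ∀ x, f x = f x0 := by
          intro x
          have := hlip x x0
          rw [← hL0'] at this
          simp only [zero_mul] at this
          have := abs_nonpos_iff.mp (le_trans this le_rfl)
          linarith [sub_eq_zero.mp this]
        have : ∀ κ : ProbabilityMeasure X, ∫ x, f x ∂(κ : Measure X) = f x0 := by
          intro κ
          have : (fun x => f x) = fun _ : X => f x0 := funext hconst
          rw [this, integral_const]
          simp
        rw [this μ, this ν, sub_self, abs_zero, ← hL0', zero_mul]
      · -- L > 0 : f / L is 1-Lipschitz
        have hg : LipschitzWith 1 (fun x => f x / L) := by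
          apply LipschitzWith.of_dist_le_mul
          intro x y
          rw [Real.dist_eq, NNReal.coe_one, one_mul, div_sub_div_same, abs_div, abs_of_pos hLpos,
            div_le_iff₀ hLpos]
          calc |f x - f y| ≤ L * dist x y := hlip x y
            _ = dist x y * L := mul_comm _ _
        have h := abs_sub_integral_le μ ν hg
        rw [integral_div, integral_div, div_sub_div_same, abs_div,
          abs_of_pos hLpos, div_le_iff₀ hLpos] at h
        calc |∫ x, f x ∂(μ : Measure X) - ∫ x, f x ∂(ν : Measure X)|
            ≤ mkDist μ ν * L := h
          _ = L * mkDist μ ν := mul_comm _ _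
    have hdiv : |∫ x, f x ∂(μ : Measure X) - ∫ x, f x ∂(ν : Measure X)| / mkDist μ ν ≤ L := by
      rcases eq_or_lt_of_le (mkDist_nonneg μ ν) with h0 | hpos
      · rw [← h0, div_zero]; exact hL0
      · rw [div_le_iff₀ hpos]
        exact key
    calc ENNReal.ofReal (|∫ x, f x ∂(μ : Measure X) - ∫ x, f x ∂(ν : Measure X)| / mkDist μ ν)
        ≤ ENNReal.ofReal L := ENNReal.ofReal_le_ofReal hdiv
      _ ≤ S := ENNReal.ofReal_toReal_le
      _ = _ := hS.symm ▸ rfl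
end

section
/- Let (X,d) be a compact metric space. For every continuous real-valued function f on X, L_d(f) = sup over pairs λ < λ' of real numbers of (λ' − λ)/I_d(f⁻¹(λ'), f⁻¹(λ)), where I_d denotes the infimum distance between the level sets (with the convention that the distance is +∞, i.e., the quotient is 0, if a level set is empty). -/
open Topology Filter Set ENNReal

/-- The infimum distance (valued in `[0,∞]`, being `∞` when a set is empty) between two
subsets of an (extended) metric space. -/
noncomputable def iEDist {X : Type*} [EMetricSpace X] (S S' : Set X) : ℝ≥0∞ :=
  ⨅ (x ∈ S) (y ∈ S'), edist x y

lemma div_iEDist_eq {X : Type*} [EMetricSpace X] (S S' : Set X) (a : ℝ≥0∞) :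
    a / iEDist S S' = ⨆ (x ∈ S) (y ∈ S'), a / edist x y := by
  simp only [iEDist, div_eq_mul_inv, ENNReal.inv_iInf, ENNReal.mul_iSup]

/-- Formula (6): for a continuous real function `f` on a compact metric space, the Lipschitz
seminorm of `f` (valued in `[0,∞]`) equals
`sup_{λ < λ'} (λ' − λ) / I_d(f⁻¹(λ'), f⁻¹(λ))`,
with the convention that the quotient is `0` when a level set is empty (`I_d = ∞`). -/
theorem stmt12 (X : Type*) [MetricSpace X] [CompactSpace X] (f : X → ℝ) (hf : Continuous f) :
    (⨆ (x : X) (y : X) (_ : x ≠ y), ENNReal.ofReal |f x - f y| / edist x y) =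
      ⨆ (l : ℝ) (l' : ℝ) (_ : l < l'),
        ENNReal.ofReal (l' - l) / iEDist (f ⁻¹' {l'}) (f ⁻¹' {l}) := by
  apply le_antisymm
  · refine iSup_le fun x => iSup_le fun y => iSup_le fun hxy => ?_
    rcases lt_trichotomy (f x) (f y) with h | h | h
    · have habs : |f x - f y| = f y - f x := by rw [abs_sub_comm]; exact abs_of_pos (by linarith)
      have h1 : iEDist (f ⁻¹' {f y}) (f ⁻¹' {f x}) ≤ edist x y := by
        rw [edist_comm]
        exact le_trans (iInf₂_le y (by simp)) (iInf₂_le x (by simp))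
      calc ENNReal.ofReal |f x - f y| / edist x y
          ≤ ENNReal.ofReal (f y - f x) / iEDist (f ⁻¹' {f y}) (f ⁻¹' {f x}) := by
            rw [habs]; exact ENNReal.div_le_div_left h1 _
        _ ≤ _ := by
            refine le_trans ?_ (le_iSup _ (f x))
            refine le_trans ?_ (le_iSup _ (f y))
            exact le_iSup (fun _ : f x < f y => ENNReal.ofReal (f y - f x) /
              iEDist (f ⁻¹' {f y}) (f ⁻¹' {f x})) h
    · simp [h]
    · have habs : |f x - f y| = f x - f y := abs_of_pos (by linarith)
      have h1 : iEDist (f ⁻¹' {f x}) (f ⁻¹' {f y}) ≤ edist x y := by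
        exact le_trans (iInf₂_le x (by simp)) (iInf₂_le y (by simp))
      calc ENNReal.ofReal |f x - f y| / edist x y
          ≤ ENNReal.ofReal (f x - f y) / iEDist (f ⁻¹' {f x}) (f ⁻¹' {f y}) := by
            rw [habs]; exact ENNReal.div_le_div_left h1 _
        _ ≤ _ := by
            refine le_trans ?_ (le_iSup _ (f y))
            refine le_trans ?_ (le_iSup _ (f x))
            exact le_iSup (fun _ : f y < f x => ENNReal.ofReal (f x - f y) /
              iEDist (f ⁻¹' {f x}) (f ⁻¹' {f y})) h
  · refine iSup_le fun l => iSup_le fun l' => iSup_le fun hll => ?_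
    rw [div_iEDist_eq]
    refine iSup₂_le fun x hx => iSup₂_le fun y hy => ?_
    simp only [mem_preimage, mem_singleton_iff] at hx hy
    have hxy : x ≠ y := by rintro rfl; rw [hx] at hy; linarith
    have habs : l' - l = |f x - f y| := by rw [hx, hy, abs_of_pos (by linarith)]
    rw [habs]
    calc ENNReal.ofReal |f x - f y| / edist x y
        ≤ ⨆ (_ : x ≠ y), ENNReal.ofReal |f x - f y| / edist x y := le_iSup (fun _ : x ≠ y => ENNReal.ofReal |f x - f y| / edist x y) hxy
      _ ≤ ⨆ (y : X) (_ : x ≠ y), ENNReal.ofReal |f x - f y| / edist x y := le_iSup (fun y => ⨆ (_ : x ≠ y), ENNReal.ofReal |f x - f y| / edist x y) y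
      _ ≤ _ := le_iSup (fun x => ⨆ (y : X) (_ : x ≠ y), ENNReal.ofReal |f x - f y| / edist x y) x
end

section
/- Let E be a compact convex subset of a locally convex Hausdorff topological vector space and suppose the set of nonempty closed faces of E with the Vietoris topology is compact. If (e_λ) is a net of extreme points of E converging to x ∈ E, then x is an extreme point of E. -/
open Topology Filter Set

/-- If the set of nonempty closed faces of `E` is Vietoris-compact and a net of extreme
points of `E` converges to `x ∈ E`, then `x` is an extreme point of `E`. -/
theorem stmt18 (V : Type*) [AddCommGroup V] [Module ℝ V] [TopologicalSpace V]
    [IsTopologicalAddGroup V] [ContinuousSMul ℝ V] [T2Space V] [LocallyConvexSpace ℝ V]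
    (E : Set V) (hEcomp : IsCompact E) (hEconv : Convex ℝ E)
    (hfaces : IsCompact {K : Hyper E | IsFaceOf E (Subtype.val '' K.1)})
    {ι : Type*} [Nonempty ι] [SemilatticeSup ι]
    (e : ι → V) (he : ∀ i, e i ∈ E.extremePoints ℝ)
    (x : V) (hx : x ∈ E) (hlim : Tendsto e atTop (𝓝 x)) :
    x ∈ E.extremePoints ℝ := by
  haveI : CompactSpace E := isCompact_iff_compactSpace.mp hEcomp
  -- the net of singletons in the hyperspace
  set eE : ι → E := fun i => ⟨e i, (he i).1⟩ with heEdef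
  set x' : E := ⟨x, hx⟩ with hx'def
  have hlim' : Tendsto eE atTop (𝓝 x') := by
    rw [tendsto_subtype_rng]; exact hlim
  set g : ι → Hyper E := fun i =>
    ⟨{eE i}, isClosed_singleton, singleton_nonempty _⟩ with hgdef
  have hgface : ∀ i, g i ∈ {K : Hyper E | IsFaceOf E (Subtype.val '' K.1)} := by
    intro i
    show IsFaceOf E (Subtype.val '' ({eE i} : Set E))
    simp only [mem_setOf_eq, hgdef, image_singleton]
    refine ⟨by simpa using (he i).1, convex_singleton _, ?_⟩
    intro a ha b hb t ht0 ht1 hab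
    have := (mem_extremePoints.mp (he i)).2 a ha b hb ?_
    · simp only [mem_singleton_iff]
      exact ⟨this.1, this.2⟩
    · refine ⟨t, 1 - t, ht0, by linarith, by ring, ?_⟩
      simpa using hab
  -- a cluster point in the face space
  haveI : (map g atTop).NeBot := map_neBot
  obtain ⟨K, hKface, hKcl⟩ :=
    hfaces (f := map g atTop) (le_principal_iff.mpr (mem_map.mpr (Eventually.of_forall hgface)))
  -- frequently properties from clustering
  have hfreq : ∀ S : Set (Hyper E), IsOpen S → K ∈ S → ∃ᶠ i in atTop, g i ∈ S := by
    intro S hS hKS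
    have := clusterPt_iff_nonempty.mp hKcl (hS.mem_nhds hKS)
    rw [frequently_iff]
    intro s hs
    obtain ⟨L, hL1, hL2⟩ := this (image_mem_map (atTop.inter_mem hs univ_mem))
    obtain ⟨i, ⟨his, -⟩, rfl⟩ := hL2
    exact ⟨i, his, hL1⟩
  -- K = {x'}
  have hKx : K.1 = {x'} := by
    apply Subset.antisymm
    · intro y hy
      by_contra hyx
      obtain ⟨U, W, hU, hW, hyU, hxW, hUW⟩ :=
        SeparatedNhds.of_isCompact_isCompact (X := E) isCompact_singleton
          isCompact_singleton (by simpa using hyx)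
      have hopen : IsOpen {L : Hyper E | (L.1 ∩ U).Nonempty} :=
        TopologicalSpace.isOpen_generateFrom_of_mem (Or.inr ⟨U, hU, rfl⟩)
      have hmem : K ∈ {L : Hyper E | (L.1 ∩ U).Nonempty} :=
        ⟨y, hy, hyU (mem_singleton y)⟩
      have h1 : ∃ᶠ i in atTop, eE i ∈ U := by
        refine (hfreq _ hopen hmem).mono ?_
        intro i hi
        obtain ⟨z, hz1, hz2⟩ := hi
        simp only [hgdef, mem_singleton_iff] at hz1
        rwa [hz1] at hz2
      have h2 : ∀ᶠ i in atTop, eE i ∈ W :=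
        hlim' (hW.mem_nhds (hxW (mem_singleton x')))
      obtain ⟨i, hiU, hiW⟩ := (h1.and_eventually h2).exists
      exact hUW.ne_of_mem hiU hiW rfl
    · intro y hy
      rw [mem_singleton_iff] at hy
      subst hy
      by_contra hxK
      obtain ⟨W, U, hW, hU, hxW, hKU, hUW⟩ :=
        SeparatedNhds.of_isCompact_isCompact (X := E) isCompact_singleton
          (K.2.1.isCompact) (by simpa using hxK)
      have hopen : IsOpen {L : Hyper E | L.1 ⊆ U} :=
        TopologicalSpace.isOpen_generateFrom_of_mem (Or.inl ⟨U, hU, rfl⟩)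
      have h1 : ∃ᶠ i in atTop, eE i ∈ U := by
        refine (hfreq _ hopen hKU).mono ?_
        intro i hi
        exact hi (mem_singleton _)
      have h2 : ∀ᶠ i in atTop, eE i ∈ W :=
        hlim' (hW.mem_nhds (hxW (mem_singleton _)))
      obtain ⟨i, hiU, hiW⟩ := (h1.and_eventually h2).exists
      exact hUW.ne_of_mem hiW hiU rfl
  -- so {x} is a face of E
  have hface : IsFaceOf E {x} := by
    have h1 : IsFaceOf E (Subtype.val '' K.1) := hKface
    have h2 : Subtype.val '' K.1 = {x} := by rw [hKx]; simp; rfl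
    rwa [h2] at h1
  refine ⟨hx, ?_⟩
  intro x₁ hx₁ x₂ hx₂ hseg
  obtain ⟨a, b, ha, hb, hab, habx⟩ := hseg
  have hb' : b = 1 - a := by linarith
  have := hface.2.2 x₁ hx₁ x₂ hx₂ a ha (by linarith) (by rw [← hb', habx]; rfl)
  exact this.1
end
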